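/- Fix an integer m ≥ 2, let f_m(x) = 2·T_m(x/2) be the generalised logistic map of degree m, and let μ be the measure on ℝ with density D(x) = 1/(π·√(4−x²)) for −2 < x < 2 and D(x) = 0 otherwise, with respect to Lebesgue measure. Then μ is invariant under f_m: the pushforward measure (f_m)_*μ equals μ. -/

import Mathlib

/-!
Under `x = 2 cos θ` the identity `T_m (cos θ) = cos (m θ)` conjugates `f_m` to the map `θ ↦ m θ`
of the circle `ℝ ⧸ 2πℤ`, which preserves Haar measure since it is a surjective endomorphism of a
compact group. It remains to see that `2 cos` pushes normalised Haar measure forward to `μ`: each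
`x ∈ (-2, 2)` has two preimages `±θ`, each contributing `1 / (2π · |d(2 cos θ)/dθ|)
= 1 / (2π · √(4 - x²))`.
-/

open MeasureTheory

/-- The generalised logistic map of degree `m`: `f_m(x) = 2·T_m(x/2)`, where `T_m`
is the `m`-th Chebyshev polynomial of the first kind. -/
noncomputable def genLogistic (m : ℕ) (x : ℝ) : ℝ :=
  2 * (Polynomial.Chebyshev.T ℝ (m : ℤ)).eval (x / 2)

/-- The common invariant density `D(x) = 1/(π·√(4−x²))` on `(−2,2)`. -/
noncomputable def dosDensity (x : ℝ) : ℝ :=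
  if -2 < x ∧ x < 2 then 1 / (Real.pi * Real.sqrt (4 - x ^ 2)) else 0

open Real Set Function
open scoped ENNReal

theorem MeasureTheory.Measure.map_withDensity_comp {α β : Type*} [MeasurableSpace α]
    [MeasurableSpace β] (μ : Measure α) {g : α → β} (hg : Measurable g) {h : β → ℝ≥0∞}
    (hh : Measurable h) : (μ.withDensity (h ∘ g)).map g = (μ.map g).withDensity h := by
  ext s hs
  rw [Measure.map_apply hg hs, withDensity_apply _ (hg hs), withDensity_apply _ hs,
    setLIntegral_map hs hh hg]
  rfl

theorem MeasureTheory.map_withDensity_abs_deriv_eq_restrict_image {s : Set ℝ} {f f' : ℝ → ℝ}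
    (hs : MeasurableSet s) (hf' : ∀ x ∈ s, HasDerivWithinAt f (f' x) s x) (hf : InjOn f s) :
    ((volume.restrict s).withDensity fun x => ENNReal.ofReal |f' x|).map f =
      volume.restrict (f '' s) := by
  simpa only [ContinuousLinearMap.smulRight_one_eq_toSpanSingleton,
    ContinuousLinearMap.det_toSpanSingleton] using
    map_withDensity_abs_det_fderiv_eq_addHaar volume hs.nullMeasurableSet
      (fun x hx => (hf' x hx).hasFDerivWithinAt) hf

theorem Function.Even.map_restrict_Ioc_neg_eq_two_smul {α : Type*} [MeasurableSpace α]
    {f : ℝ → α} (hf : f.Even) (hfm : Measurable f) {a : ℝ} (ha : 0 ≤ a) :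
    (volume.restrict (Ioc (-a) a)).map f = 2 • (volume.restrict (Ioc 0 a)).map f := by
  have hneg : (volume.restrict (Ioc (-a) 0)).map f = (volume.restrict (Ioc 0 a)).map f := by
    have hσ := (Measure.measurePreserving_neg (volume : Measure ℝ)).restrict_preimage
      (measurableSet_Ioc (a := -a) (b := 0))
    rw [← hσ.map_eq, Measure.map_map hfm measurable_neg, show f ∘ Neg.neg = f from funext hf,
      Set.neg_preimage, Set.neg_Ioc, neg_neg, neg_zero,
      Measure.restrict_congr_set Ico_ae_eq_Ioc]
  rw [← Ioc_union_Ioc_eq_Ioc (neg_nonpos.2 ha) ha,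
    Measure.restrict_union (Ioc_disjoint_Ioc_of_le le_rfl) measurableSet_Ioc,
    Measure.map_add _ _ hfm, hneg, two_smul]

lemma continuous_genLogistic (m : ℕ) : Continuous (genLogistic m) := by
  unfold genLogistic; fun_prop

lemma genLogistic_two_mul_cos (m : ℕ) (θ : ℝ) : genLogistic m (2 * cos θ) = 2 * cos (m * θ) := by
  rw [genLogistic, mul_div_cancel_left₀ _ two_ne_zero, Polynomial.Chebyshev.T_real_cos]
  norm_cast

lemma measurable_dosDensity : Measurable dosDensity :=
  Measurable.ite (measurableSet_Ioo (a := (-2 : ℝ)) (b := 2)) (by fun_prop) measurable_const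

lemma dosDensity_two_mul_cos {θ : ℝ} (hθ : θ ∈ Ioo 0 π) :
    dosDensity (2 * cos θ) = (π * (2 * sin θ))⁻¹ := by
  have hsin : 0 < sin θ := sin_pos_of_pos_of_lt_pi hθ.1 hθ.2
  have hsqrt : √(4 - (2 * cos θ) ^ 2) = 2 * sin θ := by
    rw [show 4 - (2 * cos θ) ^ 2 = (2 * sin θ) ^ 2 by nlinarith [sin_sq_add_cos_sq θ]]
    exact sqrt_sq (by positivity)
  have hcos : -2 < 2 * cos θ ∧ 2 * cos θ < 2 := by
    constructor <;> nlinarith [sin_sq_add_cos_sq θ, neg_one_le_cos θ, cos_le_one θ]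
  rw [dosDensity, if_pos hcos, hsqrt, one_div]

lemma withDensity_dosDensity_restrict_Icc :
    (volume.restrict (Icc (-2) 2)).withDensity (fun x => ENNReal.ofReal (dosDensity x)) =
      volume.withDensity (fun x => ENNReal.ofReal (dosDensity x)) := by
  rw [← withDensity_indicator measurableSet_Icc]
  congr 1
  ext x
  by_cases hx : -2 < x ∧ x < 2
  · simp [indicator, dosDensity, hx, hx.1.le, hx.2.le]
  · simp [dosDensity, hx]

lemma image_two_mul_cos_Icc : (fun θ => 2 * cos θ) '' Icc 0 π = Icc (-2) 2 := by
  rw [show (fun θ => 2 * cos θ) = (2 * ·) ∘ cos from rfl, image_comp, bijOn_cos.image_eq,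
    image_mul_left_Icc' two_pos]
  norm_num

lemma map_two_mul_cos_restrict_Icc :
    (volume.restrict (Icc 0 π)).map (fun θ => 2 * cos θ) =
      ENNReal.ofReal π • volume.withDensity (fun x => ENNReal.ofReal (dosDensity x)) := by
  set ν := volume.restrict (Icc 0 π)
  set g : ℝ → ℝ := fun θ => 2 * cos θ
  set D : ℝ → ℝ≥0∞ := fun x => ENNReal.ofReal (dosDensity x)
  set jac : ℝ → ℝ≥0∞ := fun θ => ENNReal.ofReal |-2 * sin θ|
  have hg : Measurable g := by fun_prop
  have hD : Measurable D := ENNReal.measurable_ofReal.comp measurable_dosDensity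
  have hjac : (ν.withDensity jac).map g = volume.restrict (Icc (-2) 2) := by
    rw [← image_two_mul_cos_Icc]
    refine map_withDensity_abs_deriv_eq_restrict_image measurableSet_Icc
      (fun θ _ => ?_) (fun a ha b hb hab => injOn_cos ha hb ?_)
    · simpa [mul_neg, neg_mul] using ((hasDerivAt_cos θ).const_mul 2).hasDerivWithinAt
    · simpa [g] using hab
  -- the Jacobian `2 sin θ` cancels the density `1 / (π · 2 sin θ)` at `2 cos θ`
  have hconst : jac * (D ∘ g) =ᵐ[ν] fun _ => ENNReal.ofReal π⁻¹ := by
    rw [show ν = volume.restrict (Ioo 0 π) from (Measure.restrict_congr_set Ioo_ae_eq_Icc).symm]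
    filter_upwards [ae_restrict_mem measurableSet_Ioo] with θ hθ
    have hsin : 0 < sin θ := sin_pos_of_pos_of_lt_pi hθ.1 hθ.2
    simp only [Pi.mul_apply, comp_apply, jac, g, D, dosDensity_two_mul_cos hθ]
    rw [← ENNReal.ofReal_mul (abs_nonneg _), abs_of_neg (by linarith)]
    congr 1
    field_simp
  calc ν.map g
      = ENNReal.ofReal π • (ENNReal.ofReal π⁻¹ • ν).map g := by
        rw [Measure.map_smul, smul_smul, ← ENNReal.ofReal_mul pi_pos.le,
          mul_inv_cancel₀ pi_ne_zero, ENNReal.ofReal_one, one_smul]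
    _ = ENNReal.ofReal π • ((ν.withDensity jac).withDensity (D ∘ g)).map g := by
        rw [← withDensity_mul _ (by fun_prop) (hD.comp hg), withDensity_congr_ae hconst,
          withDensity_const]
    _ = ENNReal.ofReal π • volume.withDensity D := by
        rw [Measure.map_withDensity_comp _ hg hD, hjac, withDensity_dosDensity_restrict_Icc]

local instance : Fact (0 < 2 * π) := ⟨two_pi_pos⟩

noncomputable def twoCos : AddCircle (2 * π) → ℝ := (cos_periodic.comp (2 * ·)).lift

lemma twoCos_coe (θ : ℝ) : twoCos θ = 2 * cos θ := rfl

lemma continuous_twoCos : Continuous twoCos :=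
  continuous_quot_lift _ (by fun_prop)

lemma map_twoCos_volume :
    (volume : Measure (AddCircle (2 * π))).map twoCos =
      ENNReal.ofReal (2 * π) • volume.withDensity (fun x => ENNReal.ofReal (dosDensity x)) := by
  have hcover := AddCircle.measurePreserving_mk (2 * π) (-π)
  rw [show -π + 2 * π = π by ring] at hcover
  have heven : (fun θ : ℝ => 2 * cos θ).Even := fun θ => by simp only [cos_neg]
  rw [← hcover.map_eq, Measure.map_map continuous_twoCos.measurable hcover.measurable,
    show twoCos ∘ QuotientAddGroup.mk = fun θ => 2 * cos θ from rfl,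
    heven.map_restrict_Ioc_neg_eq_two_smul (by fun_prop) pi_pos.le,
    Measure.restrict_congr_set Ioc_ae_eq_Icc, map_two_mul_cos_restrict_Icc, two_smul,
    ← add_smul, ← ENNReal.ofReal_add pi_pos.le pi_pos.le, two_mul]

lemma map_twoCos_haarAddCircle :
    AddCircle.haarAddCircle.map twoCos =
      volume.withDensity (fun x => ENNReal.ofReal (dosDensity x)) := by
  have hT : ENNReal.ofReal (2 * π) ≠ 0 := by simp [pi_pos]
  have h := map_twoCos_volume
  rw [AddCircle.volume_eq_smul_haarAddCircle, Measure.map_smul] at h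
  rw [← one_smul ℝ≥0∞ (Measure.map _ _), ← ENNReal.inv_mul_cancel hT ENNReal.ofReal_ne_top,
    mul_smul, h, smul_smul, ENNReal.inv_mul_cancel hT ENNReal.ofReal_ne_top, one_smul]

lemma genLogistic_twoCos (m : ℕ) (θ : AddCircle (2 * π)) :
    genLogistic m (twoCos θ) = twoCos ((m : ℤ) • θ) := by
  induction θ using QuotientAddGroup.induction_on with
  | H θ =>
    rw [← QuotientAddGroup.mk_zsmul, twoCos_coe, twoCos_coe, genLogistic_two_mul_cos,
      zsmul_eq_mul, Int.cast_natCast]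

/-- For `m ≥ 2`, the measure with density `D(x) = 1/(π·√(4−x²))` on
`(−2,2)` is invariant under the generalised logistic map `f_m`: `(f_m)_* μ = μ`. -/
theorem genLogistic_measure_invariant (m : ℕ) (hm : 2 ≤ m) :
    (volume.withDensity (fun x => ENNReal.ofReal (dosDensity x))).map (genLogistic m)
      = volume.withDensity (fun x => ENNReal.ofReal (dosDensity x)) := by
  have hm0 : (m : ℤ) ≠ 0 := by omega
  have hc := continuous_twoCos.measurable
  rw [← map_twoCos_haarAddCircle, Measure.map_map (continuous_genLogistic m).measurable hc,
    show genLogistic m ∘ twoCos = twoCos ∘ ((m : ℤ) • ·) from funext (genLogistic_twoCos m),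
    ← Measure.map_map hc (continuous_zsmul _).measurable,
    (Measure.measurePreserving_zsmul _ hm0).map_eq]
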